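/- Let 𝒳 and 𝒴 be LFCM spaces and F : 𝒜(𝒳) → 𝒜(𝒴) a full and faithful *-functor. Suppose that for every coarse 𝒳-module M there is a unitary U(M) : H_M → H_{F(M)} implementing the *-isomorphism End_{𝒜(𝒳)}(M) → End_{𝒜(𝒴)}(F(M)) induced by F. Then for every pair of coarse 𝒳-modules C and D and every approximable operator t : C → D, there exist central unitaries u ∈ End_{𝒜(𝒳)}(C) and v ∈ End_{𝒜(𝒳)}(D) such that F(t) = U(D) (v t u) U(C)*; that is, F(t) equals U(D) t U(C)* modulo central unitaries. -/

import Mathlib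

noncomputable section

open scoped ENNReal

/-! ## Relations -/

/-- Composition of relations: for `R ⊆ Z × Y` and `S ⊆ Y × X`,
`RelComp R S = {(z,x) | ∃ y, (z,y) ∈ R ∧ (y,x) ∈ S}`. -/
def RelComp {X Y Z : Type} (R : Set (Z × Y)) (S : Set (Y × X)) : Set (Z × X) :=
  {p | ∃ y, (p.1, y) ∈ R ∧ (y, p.2) ∈ S}

/-- Transpose of a relation. -/
def RelTrans {X Y : Type} (R : Set (Y × X)) : Set (X × Y) := {p | (p.2, p.1) ∈ R}

/-! ## Coarse spaces -/

/-- A coarse structure on a set `X`. -/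
structure CoarseSpace (X : Type) where
  entourages : Set (Set (X × X))
  diagonal_mem : {p : X × X | p.1 = p.2} ∈ entourages
  mem_of_subset : ∀ {E F : Set (X × X)}, E ∈ entourages → F ⊆ E → F ∈ entourages
  union_mem : ∀ {E F : Set (X × X)}, E ∈ entourages → F ∈ entourages → E ∪ F ∈ entourages
  transpose_mem : ∀ {E : Set (X × X)}, E ∈ entourages → RelTrans E ∈ entourages
  comp_mem : ∀ {E F : Set (X × X)}, E ∈ entourages → F ∈ entourages → RelComp E F ∈ entourages

namespace CoarseSpace

variable {X Y : Type}

/-- A gauge: a symmetric entourage containing the diagonal. -/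
def IsGauge (C : CoarseSpace X) (E : Set (X × X)) : Prop :=
  E ∈ C.entourages ∧ RelTrans E = E ∧ {p : X × X | p.1 = p.2} ⊆ E

/-- The `E`-neighbourhood `E[A]` of a set `A`. -/
def nbhd (E : Set (X × X)) (A : Set X) : Set X := {x | ∃ a ∈ A, (x, a) ∈ E}

/-- A set is bounded if `A × A` is contained in some entourage. -/
def IsBounded (C : CoarseSpace X) (A : Set X) : Prop := ∃ E ∈ C.entourages, A ×ˢ A ⊆ E

/-- `A ≺ B` : `A` is subordinate to `B`. -/
def Subordinate (C : CoarseSpace X) (A B : Set X) : Prop := ∃ E ∈ C.entourages, A ⊆ nbhd E B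

/-- `A ≍ B` : asymptotic equivalence of subsets. -/
def Asymptotic (C : CoarseSpace X) (A B : Set X) : Prop :=
  C.Subordinate A B ∧ C.Subordinate B A

/-- A coarse map between coarse spaces. -/
def IsCoarseMap (CX : CoarseSpace X) (CY : CoarseSpace Y) (f : X → Y) : Prop :=
  ∀ E ∈ CX.entourages, (fun p : X × X => (f p.1, f p.2)) '' E ∈ CY.entourages

/-- Two maps are close. -/
def Close (CX : CoarseSpace X) (CY : CoarseSpace Y) (f g : X → Y) : Prop :=
  ∀ E ∈ CX.entourages, (fun p : X × X => (f p.1, g p.2)) '' E ∈ CY.entourages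

/-- A coarse equivalence (of maps). -/
def IsCoarseEquivMap (CX : CoarseSpace X) (CY : CoarseSpace Y) (f : X → Y) : Prop :=
  IsCoarseMap CX CY f ∧ ∃ g : Y → X, IsCoarseMap CY CX g ∧
    Close CY CY (f ∘ g) id ∧ Close CX CX (g ∘ f) id

/-- A coarse embedding: a coarse map which is in addition expansive (equivalently, a coarse
equivalence onto its image with the subspace coarse structure). -/
def IsCoarseEmbedding (CX : CoarseSpace X) (CY : CoarseSpace Y) (f : X → Y) : Prop :=
  IsCoarseMap CX CY f ∧
    ∀ F ∈ CY.entourages, {p : X × X | (f p.1, f p.2) ∈ F} ∈ CX.entourages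

/-- A coarse structure is countably generated if it is the smallest coarse structure
containing some countable family of subsets of `X × X`. -/
def IsCountablyGenerated (C : CoarseSpace X) : Prop :=
  ∃ G : Set (Set (X × X)), G.Countable ∧ G ⊆ C.entourages ∧
    ∀ C' : CoarseSpace X, G ⊆ C'.entourages → C.entourages ⊆ C'.entourages

end CoarseSpace

/-- Subordination of relations `R₁, R₂ ⊆ Y × X` with respect to the product coarse structure. -/
def RelSub {X Y : Type} (CX : CoarseSpace X) (CY : CoarseSpace Y)
    (R₁ R₂ : Set (Y × X)) : Prop :=
  ∃ F ∈ CY.entourages, ∃ E ∈ CX.entourages,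
    ∀ p ∈ R₁, ∃ q ∈ R₂, (p.1, q.1) ∈ F ∧ (p.2, q.2) ∈ E

/-- Asymptotic equivalence of relations `R₁, R₂ ⊆ Y × X`. -/
def RelAsymp {X Y : Type} (CX : CoarseSpace X) (CY : CoarseSpace Y)
    (R₁ R₂ : Set (Y × X)) : Prop :=
  RelSub CX CY R₁ R₂ ∧ RelSub CX CY R₂ R₁

/-! ## LFCM spaces -/

/-- A discrete partition of a coarse space endowed with a Boolean algebra `meas` of subsets:
a measurable, locally finite, controlled partition `P` such that a set is measurable iff its
intersection with every block is measurable. -/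
structure IsDiscretePartition {X : Type} (C : CoarseSpace X) (meas : Set (Set X))
    (P : Set (Set X)) : Prop where
  nonempty : ∀ A ∈ P, A.Nonempty
  pairwiseDisjoint : ∀ A ∈ P, ∀ B ∈ P, A ≠ B → Disjoint A B
  covers : ⋃₀ P = Set.univ
  measurable : P ⊆ meas
  locallyFinite : ∀ B : Set X, C.IsBounded B → {A | A ∈ P ∧ (A ∩ B).Nonempty}.Finite
  controlled : ∃ E, C.IsGauge E ∧ ∀ A ∈ P, A ×ˢ A ⊆ E
  meas_iff : ∀ B : Set X, B ∈ meas ↔ ∀ A ∈ P, B ∩ A ∈ meas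

/-- A locally finite coarse measurable (LFCM) space: a coarse space together with a Boolean
algebra of subsets admitting a discrete partition (a chosen one is part of the data). -/
structure LFCMSpace (X : Type) where
  coarse : CoarseSpace X
  meas : Set (Set X)
  empty_mem : ∅ ∈ meas
  compl_mem : ∀ {A : Set X}, A ∈ meas → Aᶜ ∈ meas
  union_mem : ∀ {A B : Set X}, A ∈ meas → B ∈ meas → A ∪ B ∈ meas
  partition : Set (Set X)
  isPartition : IsDiscretePartition coarse meas partition

namespace LFCMSpace

variable {X Y : Type}

/-- The discreteness gauge `E_disc = ⊔_{A ∈ P} A × A` of an LFCM space. -/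
def disc (𝒳 : LFCMSpace X) : Set (X × X) := ⋃ A ∈ 𝒳.partition, A ×ˢ A

/-- A discreteness gauge: a gauge bounding the blocks of some discrete partition. -/
def IsDiscretenessGauge (𝒳 : LFCMSpace X) (E : Set (X × X)) : Prop :=
  𝒳.coarse.IsGauge E ∧
    ∃ P, IsDiscretePartition 𝒳.coarse 𝒳.meas P ∧ ∀ A ∈ P, A ×ˢ A ⊆ E

end LFCMSpace

/-- A coarse measurable map between LFCM spaces. -/
def IsCoarseMeasurableMap {X Y : Type} (𝒳 : LFCMSpace X) (𝒴 : LFCMSpace Y) (f : X → Y) : Prop :=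
  CoarseSpace.IsCoarseMap 𝒳.coarse 𝒴.coarse f ∧ ∀ B ∈ 𝒴.meas, f ⁻¹' B ∈ 𝒳.meas

/-! ## Coarse geometric modules -/

/-- A coarse geometric module over an LFCM space `𝒳`: a representation of the Boolean algebra
of measurable sets by orthogonal projections on a complex Hilbert space, nondegenerate on
bounded sets. -/
structure CoarseModule {X : Type} (𝒳 : LFCMSpace X) (H : Type) [NormedAddCommGroup H]
    [InnerProductSpace ℂ H] [CompleteSpace H] where
  proj : Set X → (H →L[ℂ] H)
  proj_empty : proj ∅ = 0
  proj_selfAdjoint : ∀ A ∈ 𝒳.meas, IsSelfAdjoint (proj A)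
  proj_inter : ∀ {A B : Set X}, A ∈ 𝒳.meas → B ∈ 𝒳.meas → proj (A ∩ B) = proj A ∘L proj B
  proj_union : ∀ {A B : Set X}, A ∈ 𝒳.meas → B ∈ 𝒳.meas → Disjoint A B →
      proj (A ∪ B) = proj A + proj B
  nondeg : Dense (↑(Submodule.span ℂ
      (⋃ A ∈ {A | A ∈ 𝒳.meas ∧ 𝒳.coarse.IsBounded A}, Set.range (proj A))) : Set H)

variable {X Y Z : Type}
variable {H₀ H₁ H₂ H₃ : Type}

/-- The support of a bounded operator between Hilbert spaces carrying representations
`pX`, `pY` of the measurable sets of LFCM spaces `𝒳` (source) and `𝒴` (target). -/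
def opSupp [NormedAddCommGroup H₁] [InnerProductSpace ℂ H₁]
    [NormedAddCommGroup H₂] [InnerProductSpace ℂ H₂]
    (𝒳 : LFCMSpace X) (𝒴 : LFCMSpace Y)
    (pX : Set X → (H₁ →L[ℂ] H₁)) (pY : Set Y → (H₂ →L[ℂ] H₂))
    (t : H₁ →L[ℂ] H₂) : Set (Y × X) :=
  ⋃₀ {S | ∃ B A, S = B ×ˢ A ∧ B ∈ 𝒴.meas ∧ B ×ˢ B ⊆ 𝒴.disc ∧
      A ∈ 𝒳.meas ∧ A ×ˢ A ⊆ 𝒳.disc ∧ pY B ∘L t ∘L pX A ≠ 0}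

/-- Controlled propagation of an operator between modules over the same LFCM space. -/
def HasControlledPropagation [NormedAddCommGroup H₁] [InnerProductSpace ℂ H₁]
    [NormedAddCommGroup H₂] [InnerProductSpace ℂ H₂]
    (𝒳 : LFCMSpace X) (pX : Set X → (H₁ →L[ℂ] H₁)) (pY : Set X → (H₂ →L[ℂ] H₂))
    (t : H₁ →L[ℂ] H₂) : Prop :=
  opSupp 𝒳 𝒳 pX pY t ∈ 𝒳.coarse.entourages

/-- Approximable operators: norm-limits of controlled propagation operators. -/
def Approximable [NormedAddCommGroup H₁] [InnerProductSpace ℂ H₁]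
    [NormedAddCommGroup H₂] [InnerProductSpace ℂ H₂]
    (𝒳 : LFCMSpace X) (pX : Set X → (H₁ →L[ℂ] H₁)) (pY : Set X → (H₂ →L[ℂ] H₂))
    (t : H₁ →L[ℂ] H₂) : Prop :=
  ∀ ε : ℝ, 0 < ε → ∃ s : H₁ →L[ℂ] H₂, HasControlledPropagation 𝒳 pX pY s ∧ ‖t - s‖ ≤ ε

/-- The rank (Hilbert dimension of the range) of an operator. -/
def projRank {H : Type} [NormedAddCommGroup H] [InnerProductSpace ℂ H]
    (p : H →L[ℂ] H) : Cardinal :=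
  LinearMap.rank (p : H →ₗ[ℂ] H)

/-- The `κ`-domain of a coarse module, computed with respect to an arbitrary gauge `E`. -/
def domKappaAt {X : Type} {H : Type} [NormedAddCommGroup H] [InnerProductSpace ℂ H]
    [CompleteSpace H] (𝒳 : LFCMSpace X) (M : CoarseModule 𝒳 H) (E : Set (X × X))
    (κ : Cardinal) : Set X :=
  ⋃₀ {A | A ∈ 𝒳.meas ∧ A ×ˢ A ⊆ E ∧ κ ≤ projRank (M.proj A)}

/-- The `κ`-domain of a coarse module (with respect to the discreteness gauge). -/
def domKappa {X : Type} {H : Type} [NormedAddCommGroup H] [InnerProductSpace ℂ H]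
    [CompleteSpace H] (𝒳 : LFCMSpace X) (M : CoarseModule 𝒳 H) (κ : Cardinal) : Set X :=
  domKappaAt 𝒳 M 𝒳.disc κ

/-- A coarse module is faithful if its faithfulness domain is asymptotic to the whole space. -/
def IsFaithfulMod {X : Type} {H : Type} [NormedAddCommGroup H] [InnerProductSpace ℂ H]
    [CompleteSpace H] (𝒳 : LFCMSpace X) (M : CoarseModule 𝒳 H) : Prop :=
  𝒳.coarse.Asymptotic (domKappa 𝒳 M 1) Set.univ

/-- A coarse module is ample if its ampleness domain is asymptotic to the whole space. -/
def IsAmpleMod {X : Type} {H : Type} [NormedAddCommGroup H] [InnerProductSpace ℂ H]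
    [CompleteSpace H] (𝒳 : LFCMSpace X) (M : CoarseModule 𝒳 H) : Prop :=
  𝒳.coarse.Asymptotic (domKappa 𝒳 M Cardinal.aleph0) Set.univ

/-- The approximate relation `f^T_{δ,F,E}` of a bounded operator. -/
def approxRel [NormedAddCommGroup H₁] [InnerProductSpace ℂ H₁]
    [NormedAddCommGroup H₂] [InnerProductSpace ℂ H₂]
    (𝒳 : LFCMSpace X) (𝒴 : LFCMSpace Y)
    (pX : Set X → (H₁ →L[ℂ] H₁)) (pY : Set Y → (H₂ →L[ℂ] H₂))
    (T : H₁ →L[ℂ] H₂) (δ : ℝ) (F : Set (Y × Y)) (E : Set (X × X)) : Set (Y × X) :=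
  ⋃₀ {S | ∃ B A, S = B ×ˢ A ∧ B ∈ 𝒴.meas ∧ B ×ˢ B ⊆ F ∧
      A ∈ 𝒳.meas ∧ A ×ˢ A ⊆ E ∧ δ < ‖pY B ∘L T ∘L pX A‖}

/-- A unitary operator between Hilbert spaces. -/
def IsUnitaryOp [NormedAddCommGroup H₁] [InnerProductSpace ℂ H₁] [CompleteSpace H₁]
    [NormedAddCommGroup H₂] [InnerProductSpace ℂ H₂] [CompleteSpace H₂]
    (U : H₁ →L[ℂ] H₂) : Prop :=
  ContinuousLinearMap.adjoint U ∘L U = ContinuousLinearMap.id ℂ H₁ ∧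
    U ∘L ContinuousLinearMap.adjoint U = ContinuousLinearMap.id ℂ H₂

/-- A central unitary of the C*-algebra of approximable operators on a coarse module. -/
def IsCentralUnitary {X : Type} {H : Type} [NormedAddCommGroup H] [InnerProductSpace ℂ H]
    [CompleteSpace H] (𝒳 : LFCMSpace X) (M : CoarseModule 𝒳 H) (u : H →L[ℂ] H) : Prop :=
  Approximable 𝒳 M.proj M.proj u ∧ IsUnitaryOp u ∧
    ∀ t : H →L[ℂ] H, Approximable 𝒳 M.proj M.proj t → u ∘L t = t ∘L u

/-- Equivalence of operators modulo central unitaries. -/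
def CongruentModCentral {X : Type} [NormedAddCommGroup H₁] [InnerProductSpace ℂ H₁]
    [CompleteSpace H₁] [NormedAddCommGroup H₂] [InnerProductSpace ℂ H₂] [CompleteSpace H₂]
    (𝒳 : LFCMSpace X) (C : CoarseModule 𝒳 H₁) (D : CoarseModule 𝒳 H₂)
    (t s : H₁ →L[ℂ] H₂) : Prop :=
  ∃ u v, IsCentralUnitary 𝒳 C u ∧ IsCentralUnitary 𝒳 D v ∧ t = v ∘L s ∘L u

/-! ## Direct sums of modules -/

/-- The direct sum `T ⊕ S` of two operators, on the `ℓ²`-product of Hilbert spaces. -/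
def prodOp [NormedAddCommGroup H₀] [InnerProductSpace ℂ H₀]
    [NormedAddCommGroup H₁] [InnerProductSpace ℂ H₁]
    [NormedAddCommGroup H₂] [InnerProductSpace ℂ H₂]
    [NormedAddCommGroup H₃] [InnerProductSpace ℂ H₃]
    (T : H₀ →L[ℂ] H₂) (S : H₁ →L[ℂ] H₃) :
    WithLp 2 (H₀ × H₁) →L[ℂ] WithLp 2 (H₂ × H₃) :=
  (WithLp.prodContinuousLinearEquiv 2 ℂ H₂ H₃).symm.toContinuousLinearMap ∘L
    (T.prodMap S) ∘L (WithLp.prodContinuousLinearEquiv 2 ℂ H₀ H₁).toContinuousLinearMap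

/-- The canonical inclusion `H₀ → H₀ ⊕ H₁`. -/
def inlOp (H₀ H₁ : Type) [NormedAddCommGroup H₀] [InnerProductSpace ℂ H₀]
    [NormedAddCommGroup H₁] [InnerProductSpace ℂ H₁] :
    H₀ →L[ℂ] WithLp 2 (H₀ × H₁) :=
  (WithLp.prodContinuousLinearEquiv 2 ℂ H₀ H₁).symm.toContinuousLinearMap ∘L
    ContinuousLinearMap.inl ℂ H₀ H₁

/-- The canonical inclusion `H₁ → H₀ ⊕ H₁`. -/
def inrOp (H₀ H₁ : Type) [NormedAddCommGroup H₀] [InnerProductSpace ℂ H₀]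
    [NormedAddCommGroup H₁] [InnerProductSpace ℂ H₁] :
    H₁ →L[ℂ] WithLp 2 (H₀ × H₁) :=
  (WithLp.prodContinuousLinearEquiv 2 ℂ H₀ H₁).symm.toContinuousLinearMap ∘L
    ContinuousLinearMap.inr ℂ H₀ H₁

/-- The canonical projection `H₀ ⊕ H₁ → H₀`. -/
def fstOp (H₀ H₁ : Type) [NormedAddCommGroup H₀] [InnerProductSpace ℂ H₀]
    [NormedAddCommGroup H₁] [InnerProductSpace ℂ H₁] :
    WithLp 2 (H₀ × H₁) →L[ℂ] H₀ :=
  ContinuousLinearMap.fst ℂ H₀ H₁ ∘L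
    (WithLp.prodContinuousLinearEquiv 2 ℂ H₀ H₁).toContinuousLinearMap

/-- The canonical projection `H₀ ⊕ H₁ → H₁`. -/
def sndOp (H₀ H₁ : Type) [NormedAddCommGroup H₀] [InnerProductSpace ℂ H₀]
    [NormedAddCommGroup H₁] [InnerProductSpace ℂ H₁] :
    WithLp 2 (H₀ × H₁) →L[ℂ] H₁ :=
  ContinuousLinearMap.snd ℂ H₀ H₁ ∘L
    (WithLp.prodContinuousLinearEquiv 2 ℂ H₀ H₁).toContinuousLinearMap

/-- `M` is the direct sum of the coarse modules `C₀` and `C₁`. -/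
def IsDirectSum {X : Type} [NormedAddCommGroup H₀] [InnerProductSpace ℂ H₀] [CompleteSpace H₀]
    [NormedAddCommGroup H₁] [InnerProductSpace ℂ H₁] [CompleteSpace H₁]
    (𝒳 : LFCMSpace X) (C₀ : CoarseModule 𝒳 H₀) (C₁ : CoarseModule 𝒳 H₁)
    (M : CoarseModule 𝒳 (WithLp 2 (H₀ × H₁))) : Prop :=
  ∀ A : Set X, M.proj A = prodOp (C₀.proj A) (C₁.proj A)

/-! ## Bundled modules and *-functors -/

/-- A coarse module over `𝒳` bundled together with its Hilbert space; the objects of the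
approximable category `𝒜(𝒳)`. -/
structure BundledModule {X : Type} (𝒳 : LFCMSpace X) where
  H : Type
  [instNorm : NormedAddCommGroup H]
  [instInner : InnerProductSpace ℂ H]
  [instComplete : CompleteSpace H]
  mod : CoarseModule 𝒳 H

attribute [instance] BundledModule.instNorm BundledModule.instInner BundledModule.instComplete

/-- A *-functor `𝒜(𝒳) → 𝒜(𝒴)` between approximable categories: a map on objects together
with a ℂ-linear, multiplicative, adjoint-preserving map on approximable operators. -/
structure StarFunctor {X Y : Type} (𝒳 : LFCMSpace X) (𝒴 : LFCMSpace Y) where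
  obj : BundledModule 𝒳 → BundledModule 𝒴
  map : ∀ {C D : BundledModule 𝒳} (t : C.H →L[ℂ] D.H),
      Approximable 𝒳 C.mod.proj D.mod.proj t → ((obj C).H →L[ℂ] (obj D).H)
  map_approximable : ∀ {C D : BundledModule 𝒳} (t : C.H →L[ℂ] D.H)
      (ht : Approximable 𝒳 C.mod.proj D.mod.proj t),
      Approximable 𝒴 (obj C).mod.proj (obj D).mod.proj (map t ht)
  map_id : ∀ (C : BundledModule 𝒳)
      (h : Approximable 𝒳 C.mod.proj C.mod.proj (ContinuousLinearMap.id ℂ C.H)),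
      map (ContinuousLinearMap.id ℂ C.H) h = ContinuousLinearMap.id ℂ (obj C).H
  map_comp : ∀ {C D G : BundledModule 𝒳} (t : C.H →L[ℂ] D.H) (s : D.H →L[ℂ] G.H)
      (ht : Approximable 𝒳 C.mod.proj D.mod.proj t)
      (hs : Approximable 𝒳 D.mod.proj G.mod.proj s)
      (hst : Approximable 𝒳 C.mod.proj G.mod.proj (s ∘L t)),
      map (s ∘L t) hst = map s hs ∘L map t ht
  map_add : ∀ {C D : BundledModule 𝒳} (t s : C.H →L[ℂ] D.H)
      (ht : Approximable 𝒳 C.mod.proj D.mod.proj t)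
      (hs : Approximable 𝒳 C.mod.proj D.mod.proj s)
      (hts : Approximable 𝒳 C.mod.proj D.mod.proj (t + s)),
      map (t + s) hts = map t ht + map s hs
  map_smul : ∀ {C D : BundledModule 𝒳} (c : ℂ) (t : C.H →L[ℂ] D.H)
      (ht : Approximable 𝒳 C.mod.proj D.mod.proj t)
      (hct : Approximable 𝒳 C.mod.proj D.mod.proj (c • t)),
      map (c • t) hct = c • map t ht
  map_star : ∀ {C D : BundledModule 𝒳} (t : C.H →L[ℂ] D.H)
      (ht : Approximable 𝒳 C.mod.proj D.mod.proj t)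
      (hstar : Approximable 𝒳 D.mod.proj C.mod.proj (ContinuousLinearMap.adjoint t)),
      map (ContinuousLinearMap.adjoint t) hstar = ContinuousLinearMap.adjoint (map t ht)

namespace StarFunctor

variable {𝒳 : LFCMSpace X} {𝒴 : LFCMSpace Y}

/-- A full functor. -/
def Full (F : StarFunctor 𝒳 𝒴) : Prop :=
  ∀ (C D : BundledModule 𝒳) (s : (F.obj C).H →L[ℂ] (F.obj D).H),
    Approximable 𝒴 (F.obj C).mod.proj (F.obj D).mod.proj s →
    ∃ (t : C.H →L[ℂ] D.H) (ht : Approximable 𝒳 C.mod.proj D.mod.proj t), F.map t ht = s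

/-- A faithful functor. -/
def Faithful (F : StarFunctor 𝒳 𝒴) : Prop :=
  ∀ (C D : BundledModule 𝒳) (t t' : C.H →L[ℂ] D.H)
    (ht : Approximable 𝒳 C.mod.proj D.mod.proj t)
    (ht' : Approximable 𝒳 C.mod.proj D.mod.proj t'),
    F.map t ht = F.map t' ht' → t = t'

/-- An essentially surjective functor (up to isomorphism in the approximable category). -/
def EssSurj (F : StarFunctor 𝒳 𝒴) : Prop :=
  ∀ D' : BundledModule 𝒴, ∃ C : BundledModule 𝒳,
    ∃ u : (F.obj C).H →L[ℂ] D'.H, Approximable 𝒴 (F.obj C).mod.proj D'.mod.proj u ∧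
    ∃ v : D'.H →L[ℂ] (F.obj C).H, Approximable 𝒴 D'.mod.proj (F.obj C).mod.proj v ∧
      v ∘L u = ContinuousLinearMap.id ℂ (F.obj C).H ∧
      u ∘L v = ContinuousLinearMap.id ℂ D'.H

/-- A unitary `U` implements the *-isomorphism induced by `F` on the endomorphism algebra of
a module `C`. -/
def Implements (F : StarFunctor 𝒳 𝒴) (C : BundledModule 𝒳)
    (U : C.H →L[ℂ] (F.obj C).H) : Prop :=
  IsUnitaryOp U ∧ ∀ (t : C.H →L[ℂ] C.H) (ht : Approximable 𝒳 C.mod.proj C.mod.proj t),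
    F.map t ht = U ∘L t ∘L ContinuousLinearMap.adjoint U

end StarFunctor

/-- The graph of a map, as a relation `⊆ Y × X`. -/
def mapGraph {X Y : Type} (f : X → Y) : Set (Y × X) := {p | p.1 = f p.2}

/-- A relation `R ⊆ Y × X` is a coarse equivalence from `DX ⊆ X` to `DY ⊆ Y` (each with the
subspace coarse structure): controlled in both directions, densely defined and coarsely
surjective relative to `DX` and `DY`. -/
def IsRelCoarseEquivOn {X Y : Type} (CX : CoarseSpace X) (CY : CoarseSpace Y)
    (DX : Set X) (DY : Set Y) (R : Set (Y × X)) : Prop :=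
  (∀ E ∈ CX.entourages, RelComp R (RelComp E (RelTrans R)) ∈ CY.entourages) ∧
  (∀ F ∈ CY.entourages, RelComp (RelTrans R) (RelComp F R) ∈ CX.entourages) ∧
  CX.Asymptotic (Prod.snd '' R) DX ∧ CY.Asymptotic (Prod.fst '' R) DY

/-- `S ⊆ X × Y` is a coarse inverse of the relation `R ⊆ Y × X` between `DX` and `DY`:
both compositions are asymptotic to the respective (restricted) diagonals. -/
def IsRelCoarseInverseOn {X Y : Type} (CX : CoarseSpace X) (CY : CoarseSpace Y)
    (DX : Set X) (DY : Set Y) (R : Set (Y × X)) (S : Set (X × Y)) : Prop :=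
  RelAsymp CX CX (RelComp S R) {p : X × X | p.1 = p.2 ∧ p.1 ∈ DX} ∧
  RelAsymp CY CY (RelComp R S) {p : Y × Y | p.1 = p.2 ∧ p.1 ∈ DY}

/-- The statement that a coarse map `f` represents the coarse embedding induced by a full and
faithful *-functor `F` via approximate relations of implementing unitaries. -/
def RepresentsInducedEmbedding {X Y : Type} {𝒳 : LFCMSpace X} {𝒴 : LFCMSpace Y}
    (F : StarFunctor 𝒳 𝒴) (f : X → Y) : Prop :=
  ∀ (C : BundledModule 𝒳), IsFaithfulMod 𝒳 C.mod →
  ∀ (U : C.H →L[ℂ] (F.obj C).H), F.Implements C U →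
  ∀ δ : ℝ, 0 < δ → δ < 1 →
  ∃ F₀ ∈ 𝒴.coarse.entourages, ∃ E₀ ∈ 𝒳.coarse.entourages,
    ∀ F' ∈ 𝒴.coarse.entourages, F₀ ⊆ F' → ∀ E ∈ 𝒳.coarse.entourages, E₀ ⊆ E →
      RelAsymp 𝒳.coarse 𝒴.coarse
        (approxRel 𝒳 𝒴 C.mod.proj (F.obj C).mod.proj U δ F' E) (mapGraph f)

/-- Bundle a coarse module into an object of the approximable category. -/
abbrev BundledModule.ofModule {X : Type} {𝒳 : LFCMSpace X} {H : Type} [NormedAddCommGroup H]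
    [InnerProductSpace ℂ H] [CompleteSpace H] (M : CoarseModule 𝒳 H) : BundledModule 𝒳 :=
  ⟨H, M⟩

theorem LFCMSpace.disc_mem {X : Type} (𝒳 : LFCMSpace X) :
    𝒳.disc ∈ 𝒳.coarse.entourages := by
  obtain ⟨E, hE, hEP⟩ := 𝒳.isPartition.controlled
  refine 𝒳.coarse.mem_of_subset hE.1 ?_
  intro p hp
  simp only [LFCMSpace.disc, Set.mem_iUnion] at hp
  obtain ⟨A, hA, hpA⟩ := hp
  exact hEP A hA hpA

theorem prodOp_comp_inlOp {H₀ H₁ H₂ H₃ : Type}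
    [NormedAddCommGroup H₀] [InnerProductSpace ℂ H₀]
    [NormedAddCommGroup H₁] [InnerProductSpace ℂ H₁]
    [NormedAddCommGroup H₂] [InnerProductSpace ℂ H₂]
    [NormedAddCommGroup H₃] [InnerProductSpace ℂ H₃]
    (T : H₀ →L[ℂ] H₂) (S : H₁ →L[ℂ] H₃) :
    prodOp T S ∘L inlOp H₀ H₁ = inlOp H₂ H₃ ∘L T := by
  ext x
  simp [prodOp, inlOp]

theorem prodOp_comp_inrOp {H₀ H₁ H₂ H₃ : Type}
    [NormedAddCommGroup H₀] [InnerProductSpace ℂ H₀]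
    [NormedAddCommGroup H₁] [InnerProductSpace ℂ H₁]
    [NormedAddCommGroup H₂] [InnerProductSpace ℂ H₂]
    [NormedAddCommGroup H₃] [InnerProductSpace ℂ H₃]
    (T : H₀ →L[ℂ] H₂) (S : H₁ →L[ℂ] H₃) :
    prodOp T S ∘L inrOp H₀ H₁ = inrOp H₂ H₃ ∘L S := by
  ext x
  simp [prodOp, inrOp]

/-- The canonical inclusion into a direct sum of coarse modules is approximable
(indeed it has controlled propagation). -/
theorem IsDirectSum.approximable_inl {X : Type} {H₀ H₁ : Type}
    [NormedAddCommGroup H₀] [InnerProductSpace ℂ H₀] [CompleteSpace H₀]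
    [NormedAddCommGroup H₁] [InnerProductSpace ℂ H₁] [CompleteSpace H₁]
    {𝒳 : LFCMSpace X} {C₀ : CoarseModule 𝒳 H₀} {C₁ : CoarseModule 𝒳 H₁}
    {M : CoarseModule 𝒳 (WithLp 2 (H₀ × H₁))} (hM : IsDirectSum 𝒳 C₀ C₁ M) :
    Approximable 𝒳 C₀.proj M.proj (inlOp H₀ H₁) := by
  intro ε hε
  refine ⟨inlOp H₀ H₁, ?_, by simp [hε.le]⟩
  refine 𝒳.coarse.mem_of_subset (𝒳.coarse.comp_mem 𝒳.disc_mem 𝒳.disc_mem) ?_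
  rintro ⟨y, x⟩ hyx
  obtain ⟨s, ⟨B, A, rfl, hBmeas, hBb, hAmeas, hAb, hne⟩, hmem⟩ := hyx
  have key : M.proj B ∘L inlOp H₀ H₁ ∘L C₀.proj A
      = inlOp H₀ H₁ ∘L C₀.proj (B ∩ A) := by
    rw [C₀.proj_inter hBmeas hAmeas, hM B, ← ContinuousLinearMap.comp_assoc,
      prodOp_comp_inlOp, ContinuousLinearMap.comp_assoc]
  have hBA : (B ∩ A).Nonempty := by
    by_contra h
    rw [Set.not_nonempty_iff_eq_empty] at h
    apply hne
    rw [key, h, C₀.proj_empty]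
    ext z
    simp
  obtain ⟨z, hzB, hzA⟩ := hBA
  obtain ⟨hyB, hxA⟩ := hmem
  exact ⟨z, hBb ⟨hyB, hzB⟩, hAb ⟨hzA, hxA⟩⟩

theorem IsDirectSum.approximable_inr {X : Type} {H₀ H₁ : Type}
    [NormedAddCommGroup H₀] [InnerProductSpace ℂ H₀] [CompleteSpace H₀]
    [NormedAddCommGroup H₁] [InnerProductSpace ℂ H₁] [CompleteSpace H₁]
    {𝒳 : LFCMSpace X} {C₀ : CoarseModule 𝒳 H₀} {C₁ : CoarseModule 𝒳 H₁}
    {M : CoarseModule 𝒳 (WithLp 2 (H₀ × H₁))} (hM : IsDirectSum 𝒳 C₀ C₁ M) :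
    Approximable 𝒳 C₁.proj M.proj (inrOp H₀ H₁) := by
  intro ε hε
  refine ⟨inrOp H₀ H₁, ?_, by simp [hε.le]⟩
  refine 𝒳.coarse.mem_of_subset (𝒳.coarse.comp_mem 𝒳.disc_mem 𝒳.disc_mem) ?_
  rintro ⟨y, x⟩ hyx
  obtain ⟨s, ⟨B, A, rfl, hBmeas, hBb, hAmeas, hAb, hne⟩, hmem⟩ := hyx
  have key : M.proj B ∘L inrOp H₀ H₁ ∘L C₁.proj A
      = inrOp H₀ H₁ ∘L C₁.proj (B ∩ A) := by
    rw [C₁.proj_inter hBmeas hAmeas, hM B, ← ContinuousLinearMap.comp_assoc,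
      prodOp_comp_inrOp, ContinuousLinearMap.comp_assoc]
  have hBA : (B ∩ A).Nonempty := by
    by_contra h
    rw [Set.not_nonempty_iff_eq_empty] at h
    apply hne
    rw [key, h, C₁.proj_empty]
    ext z
    simp
  obtain ⟨z, hzB, hzA⟩ := hBA
  obtain ⟨hyB, hxA⟩ := hmem
  exact ⟨z, hBb ⟨hyB, hzB⟩, hAb ⟨hzA, hxA⟩⟩

/-! Write `Ψ` for `F.conj U`, i.e. `Ψ x = (U Q)† (F x) (U P)` for approximable `x : P → Q`.
Because the `U M` are unitaries implementing `F`, `Ψ` is multiplicative, commutes with adjoints and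
fixes every approximable endomorphism. Embed `C` and `D` isometrically into `C ⊕ D` by `i` and
`j`: then `t = j† (j t i†) i` with `j t i†` an approximable endomorphism of `C ⊕ D`, so
`Ψ t = Ψ(j†) (j t i†) Ψ(i) = v t u` with `u = i† Ψ(i)` and `v = (j† Ψ(j))†`.
Such an operator `i† Ψ(i)` is a central unitary: `Ψ(i)` and `i` are isometries with the same
range projection `Ψ(i) Ψ(i)† = Ψ(i i†) = i i†`, and both intertwine an approximable `s` with
`i s i†`. -/

open ContinuousLinearMap
open scoped InnerProduct

section Propagation

variable [NormedAddCommGroup H₀] [InnerProductSpace ℂ H₀]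
  [NormedAddCommGroup H₁] [InnerProductSpace ℂ H₁]
  [NormedAddCommGroup H₂] [InnerProductSpace ℂ H₂]
  [NormedAddCommGroup H₃] [InnerProductSpace ℂ H₃]

theorem opSupp_mono {𝒳 : LFCMSpace X} {𝒴 : LFCMSpace Y}
    {pX : Set X → (H₀ →L[ℂ] H₀)} {pY : Set Y → (H₁ →L[ℂ] H₁)}
    {qX : Set X → (H₂ →L[ℂ] H₂)} {qY : Set Y → (H₃ →L[ℂ] H₃)}
    {s : H₀ →L[ℂ] H₁} {t : H₂ →L[ℂ] H₃}
    (h : ∀ B ∈ 𝒴.meas, ∀ A ∈ 𝒳.meas, pY B ∘L s ∘L pX A = 0 → qY B ∘L t ∘L qX A = 0) :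
    opSupp 𝒳 𝒴 qX qY t ⊆ opSupp 𝒳 𝒴 pX pY s := by
  rintro p ⟨_, ⟨B, A, rfl, hB, hBB, hA, hAA, hne⟩, hp⟩
  exact ⟨B ×ˢ A, ⟨B, A, rfl, hB, hBB, hA, hAA, fun h0 => hne (h B hB A hA h0)⟩, hp⟩

variable {𝒳 : LFCMSpace X}

theorem HasControlledPropagation.comp_left
    {pX : Set X → (H₀ →L[ℂ] H₀)} {pY : Set X → (H₁ →L[ℂ] H₁)} {qY : Set X → (H₂ →L[ℂ] H₂)}
    {s : H₀ →L[ℂ] H₁} {L : H₁ →L[ℂ] H₂} (hL : ∀ B ∈ 𝒳.meas, qY B ∘L L = L ∘L pY B)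
    (hs : HasControlledPropagation 𝒳 pX pY s) :
    HasControlledPropagation 𝒳 pX qY (L ∘L s) := by
  refine 𝒳.coarse.mem_of_subset hs (opSupp_mono fun B hB A _ h0 => ?_)
  calc qY B ∘L (L ∘L s) ∘L pX A = L ∘L (pY B ∘L s ∘L pX A) := by
        simp only [← comp_assoc, hL B hB]
    _ = 0 := by rw [h0, comp_zero]

theorem HasControlledPropagation.comp_right
    {pX : Set X → (H₀ →L[ℂ] H₀)} {pY : Set X → (H₁ →L[ℂ] H₁)} {qX : Set X → (H₂ →L[ℂ] H₂)}
    {s : H₀ →L[ℂ] H₁} {R : H₂ →L[ℂ] H₀} (hR : ∀ A ∈ 𝒳.meas, R ∘L qX A = pX A ∘L R)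
    (hs : HasControlledPropagation 𝒳 pX pY s) :
    HasControlledPropagation 𝒳 qX pY (s ∘L R) := by
  refine 𝒳.coarse.mem_of_subset hs (opSupp_mono fun B _ A hA h0 => ?_)
  calc pY B ∘L (s ∘L R) ∘L qX A = (pY B ∘L s ∘L pX A) ∘L R := by
        simp only [comp_assoc, hR A hA]
    _ = 0 := by rw [h0, zero_comp]

theorem Approximable.of_hasControlledPropagation
    {pX : Set X → (H₀ →L[ℂ] H₀)} {pY : Set X → (H₁ →L[ℂ] H₁)} {s : H₀ →L[ℂ] H₁}
    (hs : HasControlledPropagation 𝒳 pX pY s) : Approximable 𝒳 pX pY s :=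
  fun ε hε => ⟨s, hs, by simpa using hε.le⟩

theorem Approximable.map
    {pX : Set X → (H₀ →L[ℂ] H₀)} {pY : Set X → (H₁ →L[ℂ] H₁)}
    {qX : Set X → (H₂ →L[ℂ] H₂)} {qY : Set X → (H₃ →L[ℂ] H₃)}
    (Φ : (H₀ →L[ℂ] H₁) →L[ℂ] (H₂ →L[ℂ] H₃))
    (hΦ : ∀ s, HasControlledPropagation 𝒳 pX pY s → HasControlledPropagation 𝒳 qX qY (Φ s))
    {t : H₀ →L[ℂ] H₁} (ht : Approximable 𝒳 pX pY t) : Approximable 𝒳 qX qY (Φ t) := by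
  intro ε hε
  obtain ⟨s, hs, hts⟩ := ht (ε / (‖Φ‖ + 1)) (by positivity)
  refine ⟨Φ s, hΦ s hs, ?_⟩
  calc ‖Φ t - Φ s‖ = ‖Φ (t - s)‖ := by rw [map_sub]
    _ ≤ ‖Φ‖ * ‖t - s‖ := Φ.le_opNorm _
    _ ≤ (‖Φ‖ + 1) * (ε / (‖Φ‖ + 1)) := by gcongr; linarith
    _ = ε := by field_simp

theorem Approximable.comp_left
    {pX : Set X → (H₀ →L[ℂ] H₀)} {pY : Set X → (H₁ →L[ℂ] H₁)} {qY : Set X → (H₂ →L[ℂ] H₂)}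
    {s : H₀ →L[ℂ] H₁} {L : H₁ →L[ℂ] H₂} (hL : ∀ B ∈ 𝒳.meas, qY B ∘L L = L ∘L pY B)
    (hs : Approximable 𝒳 pX pY s) : Approximable 𝒳 pX qY (L ∘L s) :=
  hs.map (compL ℂ H₀ H₁ H₂ L) fun _ h => h.comp_left hL

theorem Approximable.comp_right
    {pX : Set X → (H₀ →L[ℂ] H₀)} {pY : Set X → (H₁ →L[ℂ] H₁)} {qX : Set X → (H₂ →L[ℂ] H₂)}
    {s : H₀ →L[ℂ] H₁} {R : H₂ →L[ℂ] H₀} (hR : ∀ A ∈ 𝒳.meas, R ∘L qX A = pX A ∘L R)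
    (hs : Approximable 𝒳 pX pY s) : Approximable 𝒳 qX pY (s ∘L R) :=
  hs.map ((compL ℂ H₂ H₀ H₁).flip R) fun _ h => h.comp_right hR

end Propagation

namespace CoarseModule

variable {𝒳 : LFCMSpace X} [NormedAddCommGroup H₀] [InnerProductSpace ℂ H₀] [CompleteSpace H₀]
  (P : CoarseModule 𝒳 H₀)

theorem hasControlledPropagation_of_commute {w : H₀ →L[ℂ] H₀}
    (hw : ∀ A ∈ 𝒳.meas, P.proj A ∘L w = w ∘L P.proj A) :
    HasControlledPropagation 𝒳 P.proj P.proj w := by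
  refine 𝒳.coarse.mem_of_subset (𝒳.coarse.comp_mem 𝒳.disc_mem 𝒳.disc_mem) ?_
  rintro ⟨y, x⟩ ⟨_, ⟨B, A, rfl, hB, hBB, hA, hAA, hne⟩, hyB, hxA⟩
  obtain ⟨z, hzB, hzA⟩ : (B ∩ A).Nonempty := by
    refine Set.nonempty_iff_ne_empty.2 fun hBA => hne ?_
    rw [← comp_assoc, hw B hB, comp_assoc, ← P.proj_inter hB hA, hBA, P.proj_empty, comp_zero]
  exact ⟨z, hBB ⟨hyB, hzB⟩, hAA ⟨hzA, hxA⟩⟩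

theorem approximable_of_commute {w : H₀ →L[ℂ] H₀}
    (hw : ∀ A ∈ 𝒳.meas, P.proj A ∘L w = w ∘L P.proj A) :
    Approximable 𝒳 P.proj P.proj w :=
  .of_hasControlledPropagation (P.hasControlledPropagation_of_commute hw)

theorem approximable_id : Approximable 𝒳 P.proj P.proj (ContinuousLinearMap.id ℂ H₀) :=
  P.approximable_of_commute fun A _ => by rw [id_comp, comp_id]

theorem approximable_proj {A₀ : Set X} (hA₀ : A₀ ∈ 𝒳.meas) :
    Approximable 𝒳 P.proj P.proj (P.proj A₀) :=
  P.approximable_of_commute fun A hA => by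
    rw [← P.proj_inter hA hA₀, ← P.proj_inter hA₀ hA, Set.inter_comm]

end CoarseModule

section Unitary

variable [NormedAddCommGroup H₀] [InnerProductSpace ℂ H₀] [CompleteSpace H₀]
  [NormedAddCommGroup H₁] [InnerProductSpace ℂ H₁] [CompleteSpace H₁]

theorem IsUnitaryOp.adjoint {w : H₀ →L[ℂ] H₁} (hw : IsUnitaryOp w) :
    IsUnitaryOp (w†) := by
  rw [IsUnitaryOp, adjoint_adjoint]
  exact hw.symm

theorem isUnitaryOp_adjoint_comp {i c : H₀ →L[ℂ] H₁}
    (hi : i† ∘L i = ContinuousLinearMap.id ℂ H₀) (hc : c† ∘L c = ContinuousLinearMap.id ℂ H₀)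
    (hic : c ∘L c† = i ∘L i†) :
    IsUnitaryOp (i† ∘L c) := by
  constructor
  · calc (i† ∘L c)† ∘L (i† ∘L c) = c† ∘L (i ∘L i†) ∘L c := by
          simp only [adjoint_comp, adjoint_adjoint, comp_assoc]
      _ = (c† ∘L c) ∘L (c† ∘L c) := by rw [← hic]; simp only [comp_assoc]
      _ = ContinuousLinearMap.id ℂ H₀ := by rw [hc, id_comp]
  · calc (i† ∘L c) ∘L (i† ∘L c)† = i† ∘L (c ∘L c†) ∘L i := by
          simp only [adjoint_comp, adjoint_adjoint, comp_assoc]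
      _ = (i† ∘L i) ∘L (i† ∘L i) := by rw [hic]; simp only [comp_assoc]
      _ = ContinuousLinearMap.id ℂ H₀ := by rw [hi, id_comp]

theorem adjoint_comp_commute {i c : H₀ →L[ℂ] H₁} {s : H₀ →L[ℂ] H₀}
    (hi : i† ∘L i = ContinuousLinearMap.id ℂ H₀) (hcs : c ∘L s = (i ∘L s ∘L i†) ∘L c) :
    (i† ∘L c) ∘L s = s ∘L (i† ∘L c) := by
  rw [comp_assoc, hcs]
  simp only [← comp_assoc, hi, id_comp]

variable {𝒳 : LFCMSpace X} (P : CoarseModule 𝒳 H₀)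

theorem isCentralUnitary_of_commute {w : H₀ →L[ℂ] H₀} (hw : IsUnitaryOp w)
    (hcomm : ∀ s, Approximable 𝒳 P.proj P.proj s → w ∘L s = s ∘L w) :
    IsCentralUnitary 𝒳 P w :=
  ⟨P.approximable_of_commute fun _ hA => (hcomm _ (P.approximable_proj hA)).symm, hw, hcomm⟩

theorem IsCentralUnitary.adjoint {w : H₀ →L[ℂ] H₀} (hw : IsCentralUnitary 𝒳 P w) :
    IsCentralUnitary 𝒳 P (w†) := by
  obtain ⟨-, hu, hcomm⟩ := hw
  refine isCentralUnitary_of_commute P hu.adjoint fun s hs => ?_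
  calc w† ∘L s = w† ∘L (s ∘L w) ∘L w† := by rw [comp_assoc s, hu.2, comp_id]
    _ = w† ∘L (w ∘L s) ∘L w† := by rw [hcomm s hs]
    _ = s ∘L w† := by rw [← comp_assoc, ← comp_assoc, hu.1, id_comp]

end Unitary

namespace StarFunctor

variable {𝒳 : LFCMSpace X} {𝒴 : LFCMSpace Y} (F : StarFunctor 𝒳 𝒴)
  (U : ∀ M : BundledModule 𝒳, M.H →L[ℂ] (F.obj M).H)

def conj {P Q : BundledModule 𝒳} (x : P.H →L[ℂ] Q.H)
    (hx : Approximable 𝒳 P.mod.proj Q.mod.proj x) : P.H →L[ℂ] Q.H :=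
  (U Q)† ∘L F.map x hx ∘L U P

theorem adjoint_conj {P Q : BundledModule 𝒳} {x : P.H →L[ℂ] Q.H}
    (hx : Approximable 𝒳 P.mod.proj Q.mod.proj x)
    (hx' : Approximable 𝒳 Q.mod.proj P.mod.proj (x†)) :
    (F.conj U x hx)† = F.conj U (x†) hx' := by
  simp only [conj, F.map_star x hx hx', adjoint_comp, adjoint_adjoint, comp_assoc]

variable {F U} (hU : ∀ M : BundledModule 𝒳, F.Implements M (U M))
include hU

theorem conj_comp_conj {P Q R : BundledModule 𝒳} {x : P.H →L[ℂ] Q.H} {y : Q.H →L[ℂ] R.H}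
    {z : P.H →L[ℂ] R.H} (hx : Approximable 𝒳 P.mod.proj Q.mod.proj x)
    (hy : Approximable 𝒳 Q.mod.proj R.mod.proj y) (hz : Approximable 𝒳 P.mod.proj R.mod.proj z)
    (h : y ∘L x = z) :
    F.conj U y hy ∘L F.conj U x hx = F.conj U z hz := by
  subst h
  simp only [conj, F.map_comp x y hx hy hz, comp_assoc]
  rw [← comp_assoc (U Q), (hU Q).1.2, id_comp]

theorem conj_eq_self {P : BundledModule 𝒳} {a : P.H →L[ℂ] P.H}
    (ha : Approximable 𝒳 P.mod.proj P.mod.proj a) : F.conj U a ha = a := by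
  rw [conj, (hU P).2 a ha]
  simp only [← comp_assoc, (hU P).1.1, id_comp]
  rw [comp_assoc, (hU P).1.1, comp_id]

theorem map_eq_conj {P Q : BundledModule 𝒳} {x : P.H →L[ℂ] Q.H}
    (hx : Approximable 𝒳 P.mod.proj Q.mod.proj x) :
    F.map x hx = U Q ∘L F.conj U x hx ∘L (U P)† := by
  simp only [conj, ← comp_assoc, (hU Q).1.2, id_comp]
  rw [comp_assoc, (hU P).1.2, comp_id]

end StarFunctor

section DirectSum

variable {𝒳 : LFCMSpace X}
  [NormedAddCommGroup H₀] [InnerProductSpace ℂ H₀] [NormedAddCommGroup H₁] [InnerProductSpace ℂ H₁]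

theorem map_span_range_le {p : Set X → (H₀ →L[ℂ] H₀)} {q : Set X → (H₁ →L[ℂ] H₁)}
    {i : H₀ →L[ℂ] H₁} {S : Set (Set X)} (h : ∀ A ∈ S, i ∘L p A = q A ∘L i) :
    (Submodule.span ℂ (⋃ A ∈ S, Set.range (p A))).map (i : H₀ →ₗ[ℂ] H₁) ≤
      Submodule.span ℂ (⋃ A ∈ S, Set.range (q A)) := by
  refine (Submodule.map_span_le _ _ _).2 ?_
  simp only [Set.mem_iUnion, Set.mem_range]
  rintro _ ⟨A, hA, ξ, rfl⟩
  exact Submodule.subset_span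
    (Set.mem_iUnion₂.2 ⟨A, hA, i ξ, (DFunLike.congr_fun (h A hA) ξ).symm⟩)

variable [CompleteSpace H₀] [CompleteSpace H₁]

theorem dense_span_range_prodOp (C₀ : CoarseModule 𝒳 H₀) (C₁ : CoarseModule 𝒳 H₁) :
    Dense (↑(Submodule.span ℂ (⋃ A ∈ {A | A ∈ 𝒳.meas ∧ 𝒳.coarse.IsBounded A},
      Set.range (prodOp (C₀.proj A) (C₁.proj A)))) : Set (WithLp 2 (H₀ × H₁))) := by
  set S := Submodule.span ℂ (⋃ A ∈ {A | A ∈ 𝒳.meas ∧ 𝒳.coarse.IsBounded A},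
    Set.range (prodOp (C₀.proj A) (C₁.proj A)))
  have hinl := map_span_range_le (q := fun A => prodOp (C₀.proj A) (C₁.proj A))
    (S := {A | A ∈ 𝒳.meas ∧ 𝒳.coarse.IsBounded A}) fun A _ => (prodOp_comp_inlOp _ _).symm
  have hinr := map_span_range_le (q := fun A => prodOp (C₀.proj A) (C₁.proj A))
    (S := {A | A ∈ 𝒳.meas ∧ 𝒳.coarse.IsBounded A}) fun A _ => (prodOp_comp_inrOp _ _).symm
  let e := (WithLp.prodContinuousLinearEquiv 2 ℂ H₀ H₁).symm
  refine (e.surjective.denseRange.dense_image e.continuous (C₀.nondeg.prod C₁.nondeg)).mono ?_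
  rintro _ ⟨⟨a, b⟩, ⟨ha, hb⟩, rfl⟩
  have hab : e (a, b) = inlOp H₀ H₁ a + inrOp H₀ H₁ b := by
    simp [e, inlOp, inrOp, ← WithLp.toLp_add]
  rw [hab]
  exact S.add_mem (hinl (Submodule.mem_map_of_mem ha)) (hinr (Submodule.mem_map_of_mem hb))

def CoarseModule.directSum (C₀ : CoarseModule 𝒳 H₀) (C₁ : CoarseModule 𝒳 H₁) :
    CoarseModule 𝒳 (WithLp 2 (H₀ × H₁)) where
  proj A := prodOp (C₀.proj A) (C₁.proj A)
  proj_empty := by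
    ext x
    simp [prodOp, Prod.map, C₀.proj_empty, C₁.proj_empty]
  proj_selfAdjoint A hA := by
    rw [isSelfAdjoint_iff']
    refine ((eq_adjoint_iff _ _).2 fun x y => ?_).symm
    simp [prodOp]
    exact congrArg₂ (· + ·) ((C₀.proj_selfAdjoint A hA).isSymmetric _ _)
      ((C₁.proj_selfAdjoint A hA).isSymmetric _ _)
  proj_inter hA hB := by
    ext x
    simp [prodOp, Prod.map, C₀.proj_inter hA hB, C₁.proj_inter hA hB]
  proj_union hA hB hAB := by
    ext x
    simp [prodOp, Prod.map, ← WithLp.toLp_add, C₀.proj_union hA hB hAB, C₁.proj_union hA hB hAB]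
  nondeg := dense_span_range_prodOp C₀ C₁

theorem CoarseModule.isDirectSum_directSum (C₀ : CoarseModule 𝒳 H₀) (C₁ : CoarseModule 𝒳 H₁) :
    IsDirectSum 𝒳 C₀ C₁ (C₀.directSum C₁) :=
  fun _ => rfl

end DirectSum

section Embedding

variable {𝒳 : LFCMSpace X}
  [NormedAddCommGroup H₀] [InnerProductSpace ℂ H₀] [CompleteSpace H₀]
  [NormedAddCommGroup H₁] [InnerProductSpace ℂ H₁] [CompleteSpace H₁]
  [NormedAddCommGroup H₂] [InnerProductSpace ℂ H₂]

def IsModuleEmbedding (P : CoarseModule 𝒳 H₀) (M : CoarseModule 𝒳 H₁) (i : H₀ →L[ℂ] H₁) :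
    Prop :=
  i† ∘L i = ContinuousLinearMap.id ℂ H₀ ∧
    ∀ A ∈ 𝒳.meas, M.proj A ∘L i = i ∘L P.proj A

namespace IsModuleEmbedding

variable {P : CoarseModule 𝒳 H₀} {M : CoarseModule 𝒳 H₁} {i : H₀ →L[ℂ] H₁}
  (hi : IsModuleEmbedding P M i)
include hi

theorem adjoint_comp_proj : ∀ A ∈ 𝒳.meas, i† ∘L M.proj A = P.proj A ∘L i† := by
  intro A hA
  have h := congrArg adjoint (hi.2 A hA)
  rwa [adjoint_comp, adjoint_comp, isSelfAdjoint_iff'.1 (M.proj_selfAdjoint A hA),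
    isSelfAdjoint_iff'.1 (P.proj_selfAdjoint A hA)] at h

theorem approximable_comp {p : Set X → (H₂ →L[ℂ] H₂)} {s : H₂ →L[ℂ] H₀}
    (hs : Approximable 𝒳 p P.proj s) : Approximable 𝒳 p M.proj (i ∘L s) :=
  hs.comp_left hi.2

theorem approximable_comp_adjoint {p : Set X → (H₂ →L[ℂ] H₂)} {s : H₀ →L[ℂ] H₂}
    (hs : Approximable 𝒳 P.proj p s) :
    Approximable 𝒳 M.proj p (s ∘L i†) :=
  hs.comp_right hi.adjoint_comp_proj

theorem approximable : Approximable 𝒳 P.proj M.proj i := by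
  simpa using hi.approximable_comp P.approximable_id

theorem approximable_adjoint : Approximable 𝒳 M.proj P.proj (i†) := by
  simpa using hi.approximable_comp_adjoint P.approximable_id

end IsModuleEmbedding

theorem IsDirectSum.isModuleEmbedding_inl {C₀ : CoarseModule 𝒳 H₀} {C₁ : CoarseModule 𝒳 H₁}
    {M : CoarseModule 𝒳 (WithLp 2 (H₀ × H₁))} (hM : IsDirectSum 𝒳 C₀ C₁ M) :
    IsModuleEmbedding C₀ M (inlOp H₀ H₁) :=
  ⟨(norm_map_iff_adjoint_comp_self _).1 fun x => WithLp.norm_toLp_fst 2 H₀ H₁ x,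
    fun A _ => by rw [hM A, prodOp_comp_inlOp]⟩

theorem IsDirectSum.isModuleEmbedding_inr {C₀ : CoarseModule 𝒳 H₀} {C₁ : CoarseModule 𝒳 H₁}
    {M : CoarseModule 𝒳 (WithLp 2 (H₀ × H₁))} (hM : IsDirectSum 𝒳 C₀ C₁ M) :
    IsModuleEmbedding C₁ M (inrOp H₀ H₁) :=
  ⟨(norm_map_iff_adjoint_comp_self _).1 fun x => WithLp.norm_toLp_snd 2 H₀ H₁ x,
    fun A _ => by rw [hM A, prodOp_comp_inrOp]⟩

end Embedding

namespace StarFunctor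

variable {𝒳 : LFCMSpace X} {𝒴 : LFCMSpace Y} {F : StarFunctor 𝒳 𝒴}
  {U : ∀ M : BundledModule 𝒳, M.H →L[ℂ] (F.obj M).H}
  (hU : ∀ M : BundledModule 𝒳, F.Implements M (U M))
include hU

theorem isCentralUnitary_adjoint_comp_conj {P M : BundledModule 𝒳} {i : P.H →L[ℂ] M.H}
    (hi : IsModuleEmbedding P.mod M.mod i) :
    IsCentralUnitary 𝒳 P.mod (i† ∘L F.conj U i hi.approximable) := by
  have hc : (F.conj U i hi.approximable)† = F.conj U (i†) hi.approximable_adjoint :=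
    F.adjoint_conj U _ _
  refine isCentralUnitary_of_commute P.mod (isUnitaryOp_adjoint_comp hi.1 ?_ ?_)
    fun s hs => adjoint_comp_commute hi.1 ?_
  · rw [hc, conj_comp_conj hU _ _ P.mod.approximable_id hi.1, conj_eq_self hU]
  · rw [hc, conj_comp_conj hU _ _ (hi.approximable_comp hi.approximable_adjoint) rfl,
      conj_eq_self hU]
  · have his : Approximable 𝒳 P.mod.proj M.mod.proj (i ∘L s) := hi.approximable_comp hs
    have hisi := hi.approximable_comp (hi.approximable_comp_adjoint hs)
    calc F.conj U i hi.approximable ∘L s = F.conj U (i ∘L s) his := by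
          rw [← conj_comp_conj hU hs hi.approximable his rfl, conj_eq_self hU hs]
      _ = (i ∘L s ∘L i†) ∘L F.conj U i hi.approximable := by
          rw [← conj_comp_conj hU hi.approximable hisi his
            (by rw [comp_assoc, comp_assoc, hi.1, comp_id]), conj_eq_self hU]

theorem conj_eq_of_isModuleEmbedding {C D M : BundledModule 𝒳} {i : C.H →L[ℂ] M.H}
    {j : D.H →L[ℂ] M.H} (hi : IsModuleEmbedding C.mod M.mod i)
    (hj : IsModuleEmbedding D.mod M.mod j) {t : C.H →L[ℂ] D.H}
    (ht : Approximable 𝒳 C.mod.proj D.mod.proj t) :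
    F.conj U t ht =
      (j† ∘L F.conj U j hj.approximable)† ∘L t ∘L (i† ∘L F.conj U i hi.approximable) := by
  have hjt : Approximable 𝒳 C.mod.proj M.mod.proj (j ∘L t) := hj.approximable_comp ht
  have hjti := hj.approximable_comp (hi.approximable_comp_adjoint ht)
  calc F.conj U t ht
      = F.conj U (j†) hj.approximable_adjoint ∘L F.conj U (j ∘L t) hjt :=
        (conj_comp_conj hU hjt hj.approximable_adjoint ht
          (by rw [← comp_assoc, hj.1, id_comp])).symm
    _ = F.conj U (j†) hj.approximable_adjoint ∘L (j ∘L t ∘L i†) ∘L F.conj U i hi.approximable := by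
        rw [← conj_comp_conj hU hi.approximable hjti hjt
          (by rw [comp_assoc, comp_assoc, hi.1, comp_id]), conj_eq_self hU hjti]
    _ = _ := by
        rw [adjoint_comp, F.adjoint_conj U _ hj.approximable_adjoint, adjoint_adjoint]
        simp only [comp_assoc]

end StarFunctor

theorem starFunctor_structure_on_morphisms_general {X Y : Type}
    (𝒳 : LFCMSpace X) (𝒴 : LFCMSpace Y)
    (F : StarFunctor 𝒳 𝒴)
    (U : ∀ M : BundledModule 𝒳, M.H →L[ℂ] (F.obj M).H)
    (hU : ∀ M : BundledModule 𝒳, F.Implements M (U M)) :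
    ∀ (C D : BundledModule 𝒳) (t : C.H →L[ℂ] D.H)
      (ht : Approximable 𝒳 C.mod.proj D.mod.proj t),
      ∃ (u : C.H →L[ℂ] C.H) (v : D.H →L[ℂ] D.H),
        IsCentralUnitary 𝒳 C.mod u ∧ IsCentralUnitary 𝒳 D.mod v ∧
        F.map t ht = U D ∘L (v ∘L t ∘L u) ∘L ContinuousLinearMap.adjoint (U C) := by
  intro C D t ht
  let M : BundledModule 𝒳 := .ofModule (C.mod.directSum D.mod)
  have hM : IsDirectSum 𝒳 C.mod D.mod M.mod := CoarseModule.isDirectSum_directSum C.mod D.mod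
  have hi := hM.isModuleEmbedding_inl
  have hj := hM.isModuleEmbedding_inr
  refine ⟨_, _, StarFunctor.isCentralUnitary_adjoint_comp_conj hU hi,
    (StarFunctor.isCentralUnitary_adjoint_comp_conj hU hj).adjoint, ?_⟩
  rw [StarFunctor.map_eq_conj hU ht, StarFunctor.conj_eq_of_isModuleEmbedding hU hi hj ht]

/-- Structure of full and faithful *-functors: on morphisms, such a
functor is conjugation by the implementing unitaries, up to central unitaries. -/
theorem starFunctor_structure_on_morphisms {X Y : Type}
    (𝒳 : LFCMSpace X) (𝒴 : LFCMSpace Y)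
    (F : StarFunctor 𝒳 𝒴) (hfull : F.Full) (hfaithful : F.Faithful)
    (U : ∀ M : BundledModule 𝒳, M.H →L[ℂ] (F.obj M).H)
    (hU : ∀ M : BundledModule 𝒳, F.Implements M (U M)) :
    ∀ (C D : BundledModule 𝒳) (t : C.H →L[ℂ] D.H)
      (ht : Approximable 𝒳 C.mod.proj D.mod.proj t),
      ∃ (u : C.H →L[ℂ] C.H) (v : D.H →L[ℂ] D.H),
        IsCentralUnitary 𝒳 C.mod u ∧ IsCentralUnitary 𝒳 D.mod v ∧
        F.map t ht = U D ∘L (v ∘L t ∘L u) ∘L ContinuousLinearMap.adjoint (U C) :=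
  starFunctor_structure_on_morphisms_general 𝒳 𝒴 F U hU
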